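/- arXiv:1703.01539 — 7 statements merged into one kernel-verified Lean document; each statement's English description precedes it below -/
import Mathlib

section
/- Let X be a metric space, A a finite subset of X partitioned as A = A_1 ⊎ ⋯ ⊎ A_s with each A_i nonempty, and let k ≥ 1, t ≥ 0 be integers with t ≤ |A|. Let K* ⊆ A (nonempty, |K*| ≤ k) and O* ⊆ A (|O*| ≤ t) attain the (k,t)-median cost Cmed(A,k,t), and set t_i* = |O* ∩ A_i| for each i. Then ∑_{i=1}^s Cmed(A_i, k, t_i*) ≤ 2·Cmed(A, k, t). -/
/-!
Project an optimal global center set onto each part: sending every center `c` to a point of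
`A_i` nearest to it costs at most a factor `2` for every point `p ∈ A_i`, since
`d(p, π c) ≤ d(p, c) + d(c, π c) ≤ 2 d(p, c)`. Keeping the global outliers that lie in `A_i`,
every part is then served at most twice as expensively as by the global solution, and the
parts' contributions add up to the global cost.
-/

open Metric Finset

/-- The (k,t)-median cost of a finite point set `S`: the minimum over nonempty
`K ⊆ S` with `|K| ≤ k` and `O ⊆ S` with `|O| ≤ t` of `∑_{p ∈ S \ O} d(p, K)`. -/
noncomputable def medCost {X : Type*} [MetricSpace X] [DecidableEq X]
    (S : Finset X) (k t : ℕ) : ℝ :=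
  sInf { c : ℝ | ∃ K O : Finset X, K ⊆ S ∧ K.Nonempty ∧ K.card ≤ k ∧
    O ⊆ S ∧ O.card ≤ t ∧ c = ∑ p ∈ S \ O, infDist p (K : Set X) }

section

variable {X : Type*} [MetricSpace X]

lemma medCost_le_sum_infDist [DecidableEq X] {S K O : Finset X} {k t : ℕ}
    (hKS : K ⊆ S) (hK : K.Nonempty) (hKk : K.card ≤ k) (hOS : O ⊆ S) (hOt : O.card ≤ t) :
    medCost S k t ≤ ∑ p ∈ S \ O, infDist p (K : Set X) := by
  refine csInf_le ⟨0, ?_⟩ ⟨K, O, hKS, hK, hKk, hOS, hOt, rfl⟩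
  rintro c ⟨K, O, -, -, -, -, -, rfl⟩
  exact sum_nonneg fun p _ ↦ infDist_nonneg

lemma Finset.exists_infDist_eq_dist {K : Finset X} (hK : K.Nonempty) (p : X) :
    ∃ c ∈ K, infDist p (K : Set X) = dist p c := by
  simpa using K.finite_toSet.isCompact.exists_infDist_eq_dist (by simpa using hK) p

lemma exists_subset_infDist_le_two_mul [DecidableEq X] {S : Finset X} (hS : S.Nonempty)
    {K : Finset X} (hK : K.Nonempty) :
    ∃ K' ⊆ S, K'.Nonempty ∧ K'.card ≤ K.card ∧
      ∀ p ∈ S, infDist p (K' : Set X) ≤ 2 * infDist p (K : Set X) := by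
  choose π hπS hπ using fun c : X ↦ S.exists_min_image (dist c) hS
  refine ⟨K.image π, image_subset_iff.2 fun c _ ↦ hπS c, hK.image π, card_image_le, ?_⟩
  intro p hp
  obtain ⟨c, hcK, hpc⟩ := K.exists_infDist_eq_dist hK p
  calc infDist p (K.image π : Set X)
      ≤ dist p (π c) := infDist_le_dist_of_mem (by simpa using ⟨c, hcK, rfl⟩)
    _ ≤ dist p c + dist c (π c) := dist_triangle _ _ _
    _ ≤ dist p c + dist c p := by gcongr; exact hπ c p hp
    _ = 2 * infDist p (K : Set X) := by rw [hpc, dist_comm c p]; ring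

lemma medCost_le_two_mul_sum_infDist [DecidableEq X] {S K : Finset X} (hS : S.Nonempty)
    (hK : K.Nonempty) {k : ℕ} (hKk : K.card ≤ k) (O : Finset X) :
    medCost S k (O ∩ S).card ≤ 2 * ∑ p ∈ S \ O, infDist p (K : Set X) := by
  obtain ⟨K', hK'S, hK', hK'K, hdist⟩ := exists_subset_infDist_le_two_mul hS hK
  have hSO : S \ (O ∩ S) = S \ O := by ext; simp
  calc medCost S k (O ∩ S).card
      ≤ ∑ p ∈ S \ (O ∩ S), infDist p (K' : Set X) :=
        medCost_le_sum_infDist hK'S hK' (hK'K.trans hKk) inter_subset_right le_rfl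
    _ ≤ 2 * ∑ p ∈ S \ O, infDist p (K : Set X) := by
        rw [hSO, mul_sum]
        exact sum_le_sum fun p hp ↦ hdist p (mem_sdiff.1 hp).1

end

lemma Finset.sum_biUnion_sdiff {ι α M : Type*} [DecidableEq α] [AddCommMonoid M]
    {s : Finset ι} {t : ι → Finset α} (ht : (s : Set ι).PairwiseDisjoint t) (O : Finset α)
    (f : α → M) :
    ∑ a ∈ s.biUnion t \ O, f a = ∑ i ∈ s, ∑ a ∈ t i \ O, f a := by
  have hsdiff : s.biUnion t \ O = s.biUnion fun i ↦ t i \ O := by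
    ext; simp only [mem_sdiff, mem_biUnion]; tauto
  rw [hsdiff, sum_biUnion (ht.mono fun i ↦ sdiff_subset)]

theorem sum_local_medCost_le_general {X : Type*} [MetricSpace X] [DecidableEq X]
    {s : ℕ} (𝒜 : Fin s → Finset X)
    (hdisj : ∀ i j, i ≠ j → Disjoint (𝒜 i) (𝒜 j))
    (hne : ∀ i, (𝒜 i).Nonempty)
    (A : Finset X) (hA : A = Finset.univ.biUnion 𝒜)
    (k t : ℕ)
    (Kstar Ostar : Finset X)
    (hK2 : Kstar.Nonempty) (hK3 : Kstar.card ≤ k)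
    (hopt : (∑ p ∈ A \ Ostar, infDist p (Kstar : Set X)) = medCost A k t) :
    ∑ i, medCost (𝒜 i) k ((Ostar ∩ 𝒜 i).card) ≤ 2 * medCost A k t := by
  have hpart : ((univ : Finset (Fin s)) : Set (Fin s)).PairwiseDisjoint 𝒜 :=
    fun i _ j _ hij ↦ hdisj i j hij
  calc ∑ i, medCost (𝒜 i) k ((Ostar ∩ 𝒜 i).card)
      ≤ ∑ i, 2 * ∑ p ∈ 𝒜 i \ Ostar, infDist p (Kstar : Set X) :=
        sum_le_sum fun i _ ↦ medCost_le_two_mul_sum_infDist (hne i) hK2 hK3 Ostar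
    _ = 2 * medCost A k t := by
        rw [← mul_sum, ← sum_biUnion_sdiff hpart, ← hA, hopt]

theorem sum_local_medCost_le {X : Type*} [MetricSpace X] [DecidableEq X]
    {s : ℕ} (𝒜 : Fin s → Finset X)
    (hdisj : ∀ i j, i ≠ j → Disjoint (𝒜 i) (𝒜 j))
    (hne : ∀ i, (𝒜 i).Nonempty)
    (A : Finset X) (hA : A = Finset.univ.biUnion 𝒜)
    (k t : ℕ) (hk : 1 ≤ k) (ht : t ≤ A.card)
    (Kstar Ostar : Finset X)
    (hK1 : Kstar ⊆ A) (hK2 : Kstar.Nonempty) (hK3 : Kstar.card ≤ k)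
    (hO1 : Ostar ⊆ A) (hO2 : Ostar.card ≤ t)
    (hopt : (∑ p ∈ A \ Ostar, infDist p (Kstar : Set X)) = medCost A k t) :
    ∑ i, medCost (𝒜 i) k ((Ostar ∩ 𝒜 i).card) ≤ 2 * medCost A k t :=
  sum_local_medCost_le_general 𝒜 hdisj hne A hA k t Kstar Ostar hK2 hK3 hopt
end

section
/- Let X be a metric space, A a finite set of n points of X, and K_1, K_2 nonempty finite subsets of X. Let t_1 < t_2 ≤ n be nonnegative integers, P_1, P_2 ⊆ A with |P_1| = n − t_1 and |P_2| = n − t_2, and π_1 : P_1 → K_1, π_2 : P_2 → K_2 arbitrary assignments with costs C_j = ∑_{x∈P_j} d(x, π_j(x)). Let t be an integer with t_1 ≤ t ≤ t_2 and set θ = (t − t_1)/(t_2 − t_1). Then there exists P ⊆ A with |P| = n − t such that ∑_{x∈P} d(x, K_1 ∪ K_2) ≤ (1−θ)·C_1 + θ·C_2, where d(x,K) = min_{y∈K} d(x,y). -/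
/-!
The weights `g = (1 - θ) 𝟙_{P₁} + θ 𝟙_{P₂}` lie in `[0, 1]` and sum to `n - t`, and
`∑ g x · d(x, K₁ ∪ K₂) ≤ (1 - θ) C₁ + θ C₂` because `d(x, K₁ ∪ K₂) ≤ d(x, πⱼ x)` on `Pⱼ`.
Such a fractional choice of points can be rounded: if `P` consists of the `n - t` points with
smallest `d` and `τ` separates the values of `d` on `P` from those off `P`, then every term of
`∑ (g x - 𝟙_P x)(d x - τ)` is nonnegative, and this sum is `∑ g d - ∑_P d`.
-/

open Metric Finset

section Rounding

variable {ι R : Type*} [DecidableEq ι] [CommRing R] [LinearOrder R] [IsStrictOrderedRing R]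

theorem Finset.exists_subset_card_eq_forall_le_forall_ge {α : Type*} [LinearOrder α] [Nonempty α]
    (S : Finset ι) (d : ι → α) {k : ℕ} (hk : k ≤ S.card) :
    ∃ P ⊆ S, P.card = k ∧ ∃ τ, (∀ x ∈ P, d x ≤ τ) ∧ ∀ y ∈ S \ P, τ ≤ d y := by
  induction k with
  | zero =>
    obtain ⟨τ, hτ⟩ := (S.image d).bddBelow
    exact ⟨∅, empty_subset S, card_empty, τ, by simp,
      fun y hy => hτ (mem_image_of_mem d (mem_sdiff.mp hy).1)⟩
  | succ k ih =>
    obtain ⟨P, hPS, hPk, τ, hP, hSP⟩ := ih (Nat.le_of_succ_le hk)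
    have hne : (S \ P).Nonempty := by
      rw [← card_pos, card_sdiff_of_subset hPS]; omega
    obtain ⟨y, hy, hy_min⟩ := exists_min_image (S \ P) d hne
    refine ⟨insert y P, insert_subset (mem_sdiff.mp hy).1 hPS, ?_, d y, ?_, ?_⟩
    · rw [card_insert_of_notMem (mem_sdiff.mp hy).2, hPk]
    · simp only [mem_insert, forall_eq_or_imp]
      exact ⟨le_rfl, fun x hx => (hP x hx).trans (hSP y hy)⟩
    · intro z hz
      rw [sdiff_insert] at hz
      exact hy_min z (mem_of_mem_erase hz)

theorem Finset.sum_le_sum_mul_of_forall_le_forall_ge {P S : Finset ι} (hPS : P ⊆ S)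
    {g d : ι → R} {τ : R} (hg0 : ∀ x ∈ S, 0 ≤ g x) (hg1 : ∀ x ∈ S, g x ≤ 1)
    (hg : ∑ x ∈ S, g x = P.card) (hP : ∀ x ∈ P, d x ≤ τ) (hSP : ∀ y ∈ S \ P, τ ≤ d y) :
    ∑ x ∈ P, d x ≤ ∑ x ∈ S, g x * d x := by
  have hterm : ∀ x ∈ S, 0 ≤ (g x - if x ∈ P then 1 else 0) * (d x - τ) := by
    intro x hx
    split_ifs with h
    · exact mul_nonneg_of_nonpos_of_nonpos (by linarith [hg1 x hx]) (by linarith [hP x h])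
    · exact mul_nonneg (by linarith [hg0 x hx]) (by linarith [hSP x (mem_sdiff.mpr ⟨hx, h⟩)])
  have hexpand : ∑ x ∈ S, (g x - if x ∈ P then 1 else 0) * (d x - τ)
      = ∑ x ∈ S, g x * d x - ∑ x ∈ P, d x - τ * (∑ x ∈ S, g x - P.card) := by
    simp only [sub_mul, mul_sub, sum_sub_distrib, ite_mul, one_mul, zero_mul, sum_ite_mem,
      inter_eq_right.mpr hPS, ← sum_mul, sum_const, nsmul_eq_mul]
    ring
  rw [hg, sub_self, mul_zero, sub_zero] at hexpand
  linarith [sum_nonneg hterm]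

theorem Finset.exists_subset_card_eq_sum_le_sum_mul (S : Finset ι) (g d : ι → R)
    (hg0 : ∀ x ∈ S, 0 ≤ g x) (hg1 : ∀ x ∈ S, g x ≤ 1) {k : ℕ} (hg : ∑ x ∈ S, g x = k) :
    ∃ P ⊆ S, P.card = k ∧ ∑ x ∈ P, d x ≤ ∑ x ∈ S, g x * d x := by
  have hk : k ≤ S.card := by
    have : ∑ x ∈ S, g x ≤ ∑ x ∈ S, (1 : R) := sum_le_sum hg1
    rw [hg, sum_const, nsmul_one] at this
    exact_mod_cast this
  obtain ⟨P, hPS, hPk, τ, hP, hSP⟩ := S.exists_subset_card_eq_forall_le_forall_ge d hk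
  exact ⟨P, hPS, hPk, sum_le_sum_mul_of_forall_le_forall_ge hPS hg0 hg1 (hPk ▸ hg) hP hSP⟩

theorem Finset.exists_subset_union_card_eq_sum_le_convex_comb (P₁ P₂ : Finset ι) (d : ι → R)
    {θ : R} (hθ₀ : 0 ≤ θ) (hθ₁ : θ ≤ 1) {k : ℕ} (hk : (1 - θ) * P₁.card + θ * P₂.card = k) :
    ∃ P ⊆ P₁ ∪ P₂, P.card = k ∧
      ∑ x ∈ P, d x ≤ (1 - θ) * ∑ x ∈ P₁, d x + θ * ∑ x ∈ P₂, d x := by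
  set g : ι → R := fun x => (1 - θ) * (if x ∈ P₁ then 1 else 0) + θ * (if x ∈ P₂ then 1 else 0)
  have hsum : ∀ f : ι → R, ∑ x ∈ P₁ ∪ P₂, g x * f x
      = (1 - θ) * ∑ x ∈ P₁, f x + θ * ∑ x ∈ P₂, f x := by
    intro f
    simp only [g, add_mul, mul_assoc, ite_mul, one_mul, zero_mul, sum_add_distrib, ← mul_sum,
      sum_ite_mem, inter_eq_right.mpr subset_union_left, inter_eq_right.mpr subset_union_right]
  have hg0 : ∀ x ∈ P₁ ∪ P₂, 0 ≤ g x := fun x _ => by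
    simp only [g]; split_ifs <;> linarith
  have hg1 : ∀ x ∈ P₁ ∪ P₂, g x ≤ 1 := fun x _ => by
    simp only [g]; split_ifs <;> linarith
  have hg : ∑ x ∈ P₁ ∪ P₂, g x = k := by
    simpa [sum_const, nsmul_eq_mul, hk] using hsum 1
  simpa only [hsum] using (P₁ ∪ P₂).exists_subset_card_eq_sum_le_sum_mul g d hg0 hg1 hg

end Rounding

theorem combine_two_solutions_general {X : Type*} [MetricSpace X] [DecidableEq X]
    (A : Finset X) (n : ℕ)
    (K1 K2 : Finset X)
    (t1 t2 : ℕ) (h12 : t1 < t2) (h2n : t2 ≤ n)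
    (P1 P2 : Finset X) (hP1 : P1 ⊆ A) (hP2 : P2 ⊆ A)
    (hP1card : P1.card = n - t1) (hP2card : P2.card = n - t2)
    (π1 π2 : X → X) (hπ1 : ∀ x ∈ P1, π1 x ∈ K1) (hπ2 : ∀ x ∈ P2, π2 x ∈ K2)
    (C1 C2 : ℝ) (hC1 : C1 = ∑ x ∈ P1, dist x (π1 x)) (hC2 : C2 = ∑ x ∈ P2, dist x (π2 x))
    (t : ℕ) (ht1 : t1 ≤ t) (ht2 : t ≤ t2)
    (θ : ℝ) (hθ : θ = ((t : ℝ) - (t1 : ℝ)) / ((t2 : ℝ) - (t1 : ℝ))) :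
    ∃ P ⊆ A, P.card = n - t ∧
      ∑ x ∈ P, infDist x ((K1 ∪ K2 : Finset X) : Set X) ≤ (1 - θ) * C1 + θ * C2 := by
  have hgap : (0 : ℝ) < t2 - t1 := sub_pos.mpr (Nat.cast_lt.mpr h12)
  have hθ₀ : 0 ≤ θ := hθ ▸ div_nonneg (sub_nonneg.mpr (Nat.cast_le.mpr ht1)) hgap.le
  have hθ₁ : θ ≤ 1 := hθ ▸ (div_le_one hgap).mpr (by linarith [(Nat.cast_le (α := ℝ)).mpr ht2])
  have hk : (1 - θ) * P1.card + θ * P2.card = (n - t : ℕ) := by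
    rw [hP1card, hP2card, Nat.cast_sub (by omega), Nat.cast_sub h2n, Nat.cast_sub (by omega), hθ]
    field_simp
    ring
  obtain ⟨P, hP, hPcard, hPcost⟩ := exists_subset_union_card_eq_sum_le_convex_comb P1 P2
    (fun x => infDist x ((K1 ∪ K2 : Finset X) : Set X)) hθ₀ hθ₁ hk
  refine ⟨P, hP.trans (union_subset hP1 hP2), hPcard, hPcost.trans ?_⟩
  rw [hC1, hC2]
  gcongr with x hx x hx
  · exact infDist_le_dist_of_mem (by simp [hπ1 x hx])
  · exact infDist_le_dist_of_mem (by simp [hπ2 x hx])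

/-- Combining two clustering solutions excluding `t₁` and `t₂` points into a single
solution with centers `K₁ ∪ K₂` excluding exactly `t` points, whose cost is at most
the convex combination of the two costs. -/
theorem combine_two_solutions {X : Type*} [MetricSpace X] [DecidableEq X]
    (A : Finset X) (n : ℕ) (hn : A.card = n)
    (K1 K2 : Finset X) (hK1 : K1.Nonempty) (hK2 : K2.Nonempty)
    (t1 t2 : ℕ) (h12 : t1 < t2) (h2n : t2 ≤ n)
    (P1 P2 : Finset X) (hP1 : P1 ⊆ A) (hP2 : P2 ⊆ A)
    (hP1card : P1.card = n - t1) (hP2card : P2.card = n - t2)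
    (π1 π2 : X → X) (hπ1 : ∀ x ∈ P1, π1 x ∈ K1) (hπ2 : ∀ x ∈ P2, π2 x ∈ K2)
    (C1 C2 : ℝ) (hC1 : C1 = ∑ x ∈ P1, dist x (π1 x)) (hC2 : C2 = ∑ x ∈ P2, dist x (π2 x))
    (t : ℕ) (ht1 : t1 ≤ t) (ht2 : t ≤ t2)
    (θ : ℝ) (hθ : θ = ((t : ℝ) - (t1 : ℝ)) / ((t2 : ℝ) - (t1 : ℝ))) :
    ∃ P ⊆ A, P.card = n - t ∧
      ∑ x ∈ P, infDist x ((K1 ∪ K2 : Finset X) : Set X) ≤ (1 - θ) * C1 + θ * C2 :=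
  combine_two_solutions_general A n K1 K2 t1 t2 h12 h2n P1 P2 hP1 hP2 hP1card hP2card π1 π2 hπ1 hπ2
    C1 C2 hC1 hC2 t ht1 ht2 θ hθ
end

section
/- Let X be a metric space, A a finite subset of X partitioned as A = A_1 ⊎ ⋯ ⊎ A_s with each A_i nonempty, and let k ≥ 1, t ≥ 0 be integers with t ≤ |A|. Let K* ⊆ A (nonempty, |K*| ≤ k) and O* ⊆ A (|O*| ≤ t) attain the (k,t)-center cost Ccen(A,k,t), and set t_i* = |O* ∩ A_i| for each i. Then max_{1 ≤ i ≤ s} Ccen(A_i, k, t_i*) ≤ 2·Ccen(A, k, t). -/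
/-!
Let `r = Ccen(A,k,t)` be attained by `K*, O*`. Every point of `A_i \ O*` lies within `r` of
some center `κ ∈ K*`; moving each such `κ` to one point of `A_i \ O*` within distance `r` of it
gives at most `k` centers inside `A_i`, and by the triangle inequality they serve
`A_i \ (O* ∩ A_i)` within radius `2r`.
-/

open Metric Finset

/-- The (k,t)-center cost of a finite point set `S`: the minimum over nonempty
`K ⊆ S` with `|K| ≤ k` and `O ⊆ S` with `|O| ≤ t` of `max_{p ∈ S \ O} d(p, K)`,
the maximum over the empty set being `0`. -/
noncomputable def cenCost {X : Type*} [MetricSpace X] [DecidableEq X]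
    (S : Finset X) (k t : ℕ) : ℝ :=
  sInf { c : ℝ | ∃ K O : Finset X, K ⊆ S ∧ K.Nonempty ∧ K.card ≤ k ∧
    O ⊆ S ∧ O.card ≤ t ∧
    c = sSup (insert 0 ((fun p => infDist p (K : Set X)) '' ((S \ O : Finset X) : Set X))) }

section CoverRadius

variable {X : Type*} [MetricSpace X]

noncomputable def coverRadius (K S : Finset X) : ℝ :=
  sSup (insert 0 ((fun p => infDist p (K : Set X)) '' (S : Set X)))

lemma bddAbove_coverRadius_set (K S : Finset X) :
    BddAbove (insert (0 : ℝ) ((fun p => infDist p (K : Set X)) '' (S : Set X))) :=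
  ((S.finite_toSet.image _).insert 0).bddAbove

lemma coverRadius_nonneg (K S : Finset X) : 0 ≤ coverRadius K S :=
  le_csSup (bddAbove_coverRadius_set K S) (Set.mem_insert _ _)

lemma infDist_le_coverRadius {K S : Finset X} {p : X} (hp : p ∈ S) :
    infDist p (K : Set X) ≤ coverRadius K S :=
  le_csSup (bddAbove_coverRadius_set K S) (Set.mem_insert_of_mem _ ⟨p, hp, rfl⟩)

lemma coverRadius_le {K S : Finset X} {r : ℝ} (hr : 0 ≤ r)
    (h : ∀ p ∈ S, infDist p (K : Set X) ≤ r) : coverRadius K S ≤ r := by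
  refine Real.sSup_le ?_ hr
  rintro x (rfl | ⟨p, hp, rfl⟩)
  exacts [hr, h p hp]

lemma cenCost_le_coverRadius [DecidableEq X] {S K O : Finset X} {k t : ℕ}
    (hKS : K ⊆ S) (hK : K.Nonempty) (hKk : K.card ≤ k) (hOS : O ⊆ S) (hOt : O.card ≤ t) :
    cenCost S k t ≤ coverRadius K (S \ O) := by
  refine csInf_le ⟨0, ?_⟩ ⟨K, O, hKS, hK, hKk, hOS, hOt, rfl⟩
  rintro _ ⟨K, O, -, -, -, -, -, rfl⟩
  exact coverRadius_nonneg K (S \ O)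

lemma exists_subset_card_le_infDist_le_two_mul {K B T : Finset X} {r : ℝ}
    (hK : K.Nonempty) (hT : T.Nonempty) (hBT : B ⊆ T)
    (hB : ∀ p ∈ B, infDist p (K : Set X) ≤ r) :
    ∃ K' ⊆ T, K'.Nonempty ∧ K'.card ≤ K.card ∧ ∀ p ∈ B, infDist p (K' : Set X) ≤ 2 * r := by
  classical
  obtain ⟨p₀, hp₀⟩ := hT
  let f : X → X := fun κ => if h : ∃ q ∈ B, dist q κ ≤ r then h.choose else p₀
  refine ⟨K.image f, ?_, hK.image f, card_image_le, ?_⟩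
  · simp only [subset_iff, mem_image, forall_exists_index, and_imp]
    rintro _ κ - rfl
    by_cases h : ∃ q ∈ B, dist q κ ≤ r
    · simpa only [f, dif_pos h] using hBT h.choose_spec.1
    · simpa only [f, dif_neg h] using hp₀
  · intro p hp
    obtain ⟨κ, hκK, hκ⟩ :=
      K.finite_toSet.isCompact.exists_infDist_eq_dist (coe_nonempty.mpr hK) p
    have hpκ : dist p κ ≤ r := hκ ▸ hB p hp
    have hmoved : ∃ q ∈ B, dist q κ ≤ r := ⟨p, hp, hpκ⟩
    have hfκ : dist (f κ) κ ≤ r := by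
      simpa only [f, dif_pos hmoved] using hmoved.choose_spec.2
    calc infDist p (K.image f : Set X)
        ≤ dist p (f κ) := infDist_le_dist_of_mem (by simpa using ⟨κ, hκK, rfl⟩)
      _ ≤ dist p κ + dist (f κ) κ := dist_triangle_right _ _ _
      _ ≤ 2 * r := by linarith

end CoverRadius

theorem max_local_cenCost_le_general {X : Type*} [MetricSpace X] [DecidableEq X]
    {s : ℕ} (hs : 0 < s) (𝒜 : Fin s → Finset X)
    (hne : ∀ i, (𝒜 i).Nonempty)
    (A : Finset X) (hA : A = Finset.univ.biUnion 𝒜)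
    (k t : ℕ)
    (Kstar Ostar : Finset X)
    (hK2 : Kstar.Nonempty) (hK3 : Kstar.card ≤ k)
    (hopt : sSup (insert 0 ((fun p => infDist p (Kstar : Set X)) ''
        ((A \ Ostar : Finset X) : Set X))) = cenCost A k t) :
    (Finset.univ : Finset (Fin s)).sup' ⟨⟨0, hs⟩, Finset.mem_univ _⟩
        (fun i => cenCost (𝒜 i) k ((Ostar ∩ 𝒜 i).card)) ≤ 2 * cenCost A k t := by
  have hopt : coverRadius Kstar (A \ Ostar) = cenCost A k t := hopt
  refine sup'_le _ _ fun i _ => ?_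
  have hserved : ∀ p ∈ 𝒜 i \ (Ostar ∩ 𝒜 i), infDist p (Kstar : Set X) ≤ cenCost A k t := by
    intro p hp
    simp only [mem_sdiff, mem_inter, not_and] at hp
    refine hopt ▸ infDist_le_coverRadius (mem_sdiff.mpr ⟨?_, fun h => hp.2 h hp.1⟩)
    exact hA ▸ mem_biUnion.mpr ⟨i, mem_univ _, hp.1⟩
  obtain ⟨K', hK'sub, hK'ne, hK'card, hK'serves⟩ :=
    exists_subset_card_le_infDist_le_two_mul hK2 (hne i) sdiff_subset hserved
  calc cenCost (𝒜 i) k (Ostar ∩ 𝒜 i).card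
      ≤ coverRadius K' (𝒜 i \ (Ostar ∩ 𝒜 i)) :=
        cenCost_le_coverRadius hK'sub hK'ne (hK'card.trans hK3) inter_subset_right le_rfl
    _ ≤ 2 * cenCost A k t :=
        coverRadius_le (by linarith [hopt ▸ coverRadius_nonneg Kstar (A \ Ostar)]) hK'serves

theorem max_local_cenCost_le {X : Type*} [MetricSpace X] [DecidableEq X]
    {s : ℕ} (hs : 0 < s) (𝒜 : Fin s → Finset X)
    (hdisj : ∀ i j, i ≠ j → Disjoint (𝒜 i) (𝒜 j))
    (hne : ∀ i, (𝒜 i).Nonempty)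
    (A : Finset X) (hA : A = Finset.univ.biUnion 𝒜)
    (k t : ℕ) (hk : 1 ≤ k) (ht : t ≤ A.card)
    (Kstar Ostar : Finset X)
    (hK1 : Kstar ⊆ A) (hK2 : Kstar.Nonempty) (hK3 : Kstar.card ≤ k)
    (hO1 : Ostar ⊆ A) (hO2 : Ostar.card ≤ t)
    (hopt : sSup (insert 0 ((fun p => infDist p (Kstar : Set X)) ''
        ((A \ Ostar : Finset X) : Set X))) = cenCost A k t) :
    (Finset.univ : Finset (Fin s)).sup' ⟨⟨0, hs⟩, Finset.mem_univ _⟩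
        (fun i => cenCost (𝒜 i) k ((Ostar ∩ 𝒜 i).card)) ≤ 2 * cenCost A k t :=
  max_local_cenCost_le_general hs 𝒜 hne A hA k t Kstar Ostar hK2 hK3 hopt
end

section
/- In the uncertain setup, let k ≥ 1 and t ≥ 0 be integers, M ⊆ { y_j : j ∈ A } a nonempty set with |M| ≤ k, O ⊆ A with |O| ≤ t, and π : A∖O → M an assignment; let C_G = ∑_{j∈A∖O} ( ℓ_j + d(y_j, π(j)) ). Then ∑_{j∈A∖O} E_j[d(·, π(j))] ≤ 2·C_G. -/
open Metric Finset

/-! The median objective only needs the triangle inequality: averaging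
`d(p, π j) ≤ d(p, y j) + d(y j, π j)` against the probability weights of `j` bounds the expected
distance from `j` to its centre by its compressed-graph distance `ℓ j + d(y j, π j)`. Summing gives
`∑ E_j[d(·, π j)] ≤ C_G`, and `C_G ≥ 0`. -/

theorem Finset.sum_mul_dist_le_sum_mul_dist_add_dist {P : Type*} [PseudoMetricSpace P]
    (s : Finset P) (w : P → ℝ) (hw0 : ∀ p ∈ s, 0 ≤ w p) (hw1 : ∑ p ∈ s, w p = 1) (y z : P) :
    ∑ p ∈ s, w p * dist p z ≤ ∑ p ∈ s, w p * dist p y + dist y z :=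
  calc ∑ p ∈ s, w p * dist p z
      ≤ ∑ p ∈ s, w p * (dist p y + dist y z) :=
        sum_le_sum fun p hp => mul_le_mul_of_nonneg_left (dist_triangle p y z) (hw0 p hp)
    _ = ∑ p ∈ s, w p * dist p y + dist y z := by
        simp only [mul_add, sum_add_distrib, ← sum_mul, hw1, one_mul]

theorem compressed_to_uncertain_median_general {P : Type*} [MetricSpace P]
    {ι : Type*} [DecidableEq ι]
    (SP : Finset P)
    (A : Finset ι) (w : ι → P → ℝ)
    (hw0 : ∀ j ∈ A, ∀ p ∈ SP, 0 ≤ w j p)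
    (hw1 : ∀ j ∈ A, ∑ p ∈ SP, w j p = 1)
    (y : ι → P)
    (ℓ : ι → ℝ) (hℓ : ∀ j, ℓ j = ∑ p ∈ SP, w j p * dist p (y j))
    (O : Finset ι)
    (π : ι → P)
    (CG : ℝ) (hCG : CG = ∑ j ∈ A \ O, (ℓ j + dist (y j) (π j))) :
    ∑ j ∈ A \ O, ∑ p ∈ SP, w j p * dist p (π j) ≤ 2 * CG := by
  have hA : ∀ j ∈ A \ O, j ∈ A := fun j hj => (mem_sdiff.mp hj).1
  have hcost : ∑ j ∈ A \ O, ∑ p ∈ SP, w j p * dist p (π j) ≤ CG :=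
    hCG ▸ sum_le_sum fun j hj => hℓ j ▸
      SP.sum_mul_dist_le_sum_mul_dist_add_dist (w j) (hw0 j (hA j hj)) (hw1 j (hA j hj)) _ _
  have hCG0 : 0 ≤ CG :=
    hCG ▸ sum_nonneg fun j hj => add_nonneg (hℓ j ▸ sum_nonneg fun p hp =>
      mul_nonneg (hw0 j (hA j hj) p hp) dist_nonneg) dist_nonneg
  linarith

/-- Lemma 5.5 (median objective): a solution on the compressed graph yields a solution
of the uncertain (k,t)-median problem of cost at most 2 times larger. -/
theorem compressed_to_uncertain_median {P : Type*} [MetricSpace P]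
    {ι : Type*} [DecidableEq ι] [DecidableEq P]
    (SP : Finset P) (hSP : SP.Nonempty)
    (A : Finset ι) (w : ι → P → ℝ)
    (hw0 : ∀ j ∈ A, ∀ p ∈ SP, 0 ≤ w j p)
    (hw1 : ∀ j ∈ A, ∑ p ∈ SP, w j p = 1)
    (y : ι → P)
    (hy : ∀ j ∈ A, ∀ z : P,
      ∑ p ∈ SP, w j p * dist p (y j) ≤ ∑ p ∈ SP, w j p * dist p z)
    (ℓ : ι → ℝ) (hℓ : ∀ j, ℓ j = ∑ p ∈ SP, w j p * dist p (y j))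
    (k t : ℕ) (hk : 1 ≤ k)
    (M : Finset P) (hM : M ⊆ A.image y) (hMne : M.Nonempty) (hMcard : M.card ≤ k)
    (O : Finset ι) (hOA : O ⊆ A) (hOcard : O.card ≤ t)
    (π : ι → P) (hπ : ∀ j ∈ A \ O, π j ∈ M)
    (CG : ℝ) (hCG : CG = ∑ j ∈ A \ O, (ℓ j + dist (y j) (π j))) :
    ∑ j ∈ A \ O, ∑ p ∈ SP, w j p * dist p (π j) ≤ 2 * CG :=
  compressed_to_uncertain_median_general SP A w hw0 hw1 y ℓ hℓ O π CG hCG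
end

section
/- In the uncertain setup with truncated distances, let Z ⊆ A be nonempty, k ≥ 1, t ≥ 0 and τ ≥ 0. If the truncated (k,t)-median cost satisfies C(Z,k,t,ρ_τ) ≥ τ, then the (k,t)-center-g cost satisfies Cg(Z,k,t) ≥ τ/3. -/
/-!
Suppose an admissible assignment `(K, O, π)` has center-g cost `c < τ/3`, and put `a = 2τ/3`.
Let `Q` be the probability that every inlier lands within `a` of its center and
`E = ∑ⱼ Eⱼ[(d(·, π j) - a)⁺]`. Pointwise, the maximal assignment distance dominates both
`a · 1[some dⱼ > a]` and `∑ⱼ (dⱼ - a)⁺ ∏_{i ≠ j} 1[dᵢ ≤ a]` (at most one term survives), so by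
independence `a (1 - Q) ≤ c` and `Q · E ≤ c`. On the other hand each center `π j` has a support
point within `Eⱼ[d(·, π j)] ≤ c` of it; moving the centers there costs at most `c ≤ τ - a` per
distance, so `τ ≤ C(Z,k,t,ρ_τ) ≤ E`. These three inequalities are incompatible with `c < τ/3`.
-/

open Metric Finset

/-- The support of a set `Z` of uncertain nodes: all points of `SP` given positive
weight by some node of `Z`. -/
noncomputable def nodeSupp {P : Type*} {ι : Type*} [DecidableEq P] [DecidableEq ι]
    (SP : Finset P) (w : ι → P → ℝ) (Z : Finset ι) : Finset P :=
  open Classical in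
  Z.biUnion fun j => SP.filter fun p => 0 < w j p

/-- The truncated (k,t)-median cost `C(Z,k,t,ρ_τ)`. -/
noncomputable def trMedCost {P : Type*} {ι : Type*} [MetricSpace P]
    [DecidableEq P] [DecidableEq ι]
    (SP : Finset P) (w : ι → P → ℝ) (Z : Finset ι) (k t : ℕ) (τ : ℝ) : ℝ :=
  sInf { c : ℝ | ∃ (K : Finset P) (O : Finset ι),
    K ⊆ nodeSupp SP w Z ∧ K.Nonempty ∧ K.card ≤ k ∧ O ⊆ Z ∧ O.card ≤ t ∧
    c = ∑ j ∈ Z \ O,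
      sInf ((fun m => ∑ p ∈ SP, w j p * max (dist p m - τ) 0) '' (K : Set P)) }

/-- The uncertain (k,t)-center-g cost `Cg(Z,k,t)`: the infimum over centers `K`,
outliers `O` and assignments `π` of the expectation, over independent realizations
`σ` of the nodes, of the maximum assignment distance. -/
noncomputable def cgCost {P : Type*} {ι : Type*} [MetricSpace P] [DecidableEq ι]
    (SP : Finset P) (w : ι → P → ℝ) (Z : Finset ι) (k t : ℕ) : ℝ :=
  sInf { c : ℝ | ∃ K : Finset P, K.Nonempty ∧ K.card ≤ k ∧
    ∃ O : Finset ι, O ⊆ Z ∧ O.card ≤ t ∧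
    ∃ π : ι → P, (∀ j ∈ Z \ O, π j ∈ K) ∧
    c = ∑ σ ∈ Z.pi (fun _ => SP),
      (∏ j ∈ Z.attach, w j.1 (σ j.1 j.2)) *
      sSup (insert 0 { x : ℝ | ∃ j, ∃ hj : j ∈ Z \ O,
        x = dist (σ j (Finset.sdiff_subset hj)) (π j) }) }

section Pointwise

variable {α : Type*} {s : Finset α} {d : α → ℝ} {a M : ℝ}

theorem mul_one_sub_prod_ite_le (hM : 0 ≤ M) (hd : ∀ x ∈ s, d x ≤ M) :
    a * (1 - ∏ x ∈ s, if d x ≤ a then (1 : ℝ) else 0) ≤ M := by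
  by_cases hall : ∀ x ∈ s, d x ≤ a
  · rw [prod_eq_one fun x hx => if_pos (hall x hx)]
    simpa using hM
  · push Not at hall
    obtain ⟨x, hx, hxa⟩ := hall
    rw [prod_eq_zero hx (if_neg hxa.not_ge)]
    linarith [hd x hx]

theorem sum_max_sub_mul_prod_ite_le [DecidableEq α] (ha : 0 ≤ a) (hM : 0 ≤ M)
    (hd : ∀ x ∈ s, d x ≤ M) :
    ∑ x ∈ s, max (d x - a) 0 * ∏ y ∈ s.erase x, (if d y ≤ a then (1 : ℝ) else 0) ≤ M := by
  by_cases hall : ∀ x ∈ s, d x ≤ a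
  · rw [sum_eq_zero fun x hx => by rw [max_eq_right (by linarith [hall x hx]), zero_mul]]
    exact hM
  · push Not at hall
    obtain ⟨x₀, hx₀, hx₀a⟩ := hall
    -- every other term contains the vanishing factor of `x₀`
    rw [sum_eq_single_of_mem x₀ hx₀ fun x _ hne => by
      rw [prod_eq_zero (mem_erase.mpr ⟨hne.symm, hx₀⟩) (if_neg hx₀a.not_ge), mul_zero]]
    have hprod : ∏ y ∈ s.erase x₀, (if d y ≤ a then (1 : ℝ) else 0) ≤ 1 :=
      prod_le_one (fun _ _ => by split_ifs <;> norm_num) (fun _ _ => by split_ifs <;> norm_num)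
    calc max (d x₀ - a) 0 * ∏ y ∈ s.erase x₀, (if d y ≤ a then (1 : ℝ) else 0)
        ≤ max (d x₀ - a) 0 := mul_le_of_le_one_right (le_max_right _ _) hprod
      _ ≤ M := by rw [max_eq_left (by linarith)]; linarith [hd x₀ hx₀]

end Pointwise

theorem exists_pos_weight_le_sum_mul {P : Type*} {s : Finset P} {v : P → ℝ}
    (hv0 : ∀ p ∈ s, 0 ≤ v p) (hv1 : ∑ p ∈ s, v p = 1) (f : P → ℝ) :
    ∃ q ∈ s, 0 < v q ∧ f q ≤ ∑ p ∈ s, v p * f p := by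
  set A := ∑ p ∈ s, v p * f p
  have hsupp : ∀ g : P → ℝ, ∑ p ∈ s with 0 < v p, v p * g p = ∑ p ∈ s, v p * g p := fun g =>
    sum_filter_of_ne fun p hp hne => (hv0 p hp).lt_of_ne fun h => hne (by rw [← h, zero_mul])
  have hne : (s.filter fun p => 0 < v p).Nonempty := by
    rw [nonempty_iff_ne_empty]
    intro hempty
    have := hsupp fun _ => 1
    rw [hempty, sum_empty] at this
    simp only [mul_one] at this
    linarith
  have hle : ∑ p ∈ s with 0 < v p, v p * f p ≤ ∑ p ∈ s with 0 < v p, v p * A := by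
    rw [hsupp, hsupp, ← sum_mul, hv1, one_mul]
  obtain ⟨q, hq, hqA⟩ := exists_le_of_sum_le hne hle
  obtain ⟨hqs, hvq⟩ := mem_filter.mp hq
  exact ⟨q, hqs, hvq, le_of_mul_le_mul_left hqA hvq⟩

section Realization

variable {P ι : Type*} [DecidableEq ι] (SP : Finset P) (w : ι → P → ℝ) (Z : Finset ι)

noncomputable def realizationExp (F : (∀ i ∈ Z, P) → ℝ) : ℝ :=
  ∑ σ ∈ Z.pi (fun _ => SP), (∏ x ∈ Z.attach, w x.1 (σ x.1 x.2)) * F σ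

variable {SP w Z}

theorem realizationExp_prod (f : ι → P → ℝ) :
    realizationExp SP w Z (fun σ => ∏ x ∈ Z.attach, f x.1 (σ x.1 x.2)) =
      ∏ i ∈ Z, ∑ p ∈ SP, w i p * f i p := by
  simp only [realizationExp, ← prod_mul_distrib]
  exact (prod_sum Z (fun _ => SP) fun i p => w i p * f i p).symm

theorem realizationExp_mul_prod_erase {j : ι} (hj : j ∈ Z) (g : P → ℝ) (f : ι → P → ℝ) :
    realizationExp SP w Z
        (fun σ => g (σ j hj) * ∏ x ∈ Z.attach.erase ⟨j, hj⟩, f x.1 (σ x.1 x.2)) =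
      (∑ p ∈ SP, w j p * g p) * ∏ i ∈ Z.erase j, ∑ p ∈ SP, w i p * f i p := by
  have hupdate : ∀ σ : ∀ i ∈ Z, P,
      g (σ j hj) * ∏ x ∈ Z.attach.erase ⟨j, hj⟩, f x.1 (σ x.1 x.2) =
        ∏ x ∈ Z.attach, Function.update f j g x.1 (σ x.1 x.2) := fun σ => by
    rw [← mul_prod_erase _ _ (mem_attach Z ⟨j, hj⟩), Function.update_self]
    congr 1
    refine prod_congr rfl fun x hx => ?_
    rw [Function.update_of_ne fun h => (mem_erase.mp hx).1 (Subtype.ext h)]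
  simp only [hupdate, realizationExp_prod, ← mul_prod_erase _ _ hj, Function.update_self]
  congr 1
  exact prod_congr rfl fun i hi => by rw [Function.update_of_ne (mem_erase.mp hi).1]

theorem realizationExp_comp_eval (hw1 : ∀ i ∈ Z, ∑ p ∈ SP, w i p = 1) {j : ι} (hj : j ∈ Z)
    (g : P → ℝ) :
    realizationExp SP w Z (fun σ => g (σ j hj)) = ∑ p ∈ SP, w j p * g p := by
  have := realizationExp_mul_prod_erase (SP := SP) (w := w) hj g fun _ _ => 1
  simp only [prod_const_one, mul_one] at this
  rw [this, prod_eq_one fun i hi => hw1 i (mem_of_mem_erase hi), mul_one]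

theorem realizationExp_one (hw1 : ∀ i ∈ Z, ∑ p ∈ SP, w i p = 1) :
    realizationExp SP w Z (fun _ => 1) = 1 := by
  simpa [prod_eq_one hw1] using realizationExp_prod (SP := SP) (w := w) (Z := Z) fun _ _ => 1

theorem realizationExp_sub (F G : (∀ i ∈ Z, P) → ℝ) :
    realizationExp SP w Z (fun σ => F σ - G σ) =
      realizationExp SP w Z F - realizationExp SP w Z G := by
  simp only [realizationExp, mul_sub, sum_sub_distrib]

theorem realizationExp_const_mul (c : ℝ) (F : (∀ i ∈ Z, P) → ℝ) :
    realizationExp SP w Z (fun σ => c * F σ) = c * realizationExp SP w Z F := by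
  simp only [realizationExp, mul_sum]
  exact sum_congr rfl fun _ _ => by ring

theorem realizationExp_sum {α : Type*} (s : Finset α) (F : α → (∀ i ∈ Z, P) → ℝ) :
    realizationExp SP w Z (fun σ => ∑ x ∈ s, F x σ) = ∑ x ∈ s, realizationExp SP w Z (F x) := by
  simp only [realizationExp, mul_sum]
  exact sum_comm

theorem realizationExp_mono (hw0 : ∀ i ∈ Z, ∀ p ∈ SP, 0 ≤ w i p) {F G : (∀ i ∈ Z, P) → ℝ}
    (hFG : ∀ σ, F σ ≤ G σ) : realizationExp SP w Z F ≤ realizationExp SP w Z G :=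
  sum_le_sum fun σ hσ => mul_le_mul_of_nonneg_left (hFG σ)
    (prod_nonneg fun x _ => hw0 x.1 x.2 _ (mem_pi.mp hσ x.1 x.2))

end Realization

section Domination

variable {P ι : Type*} [DecidableEq ι] {SP : Finset P} {w : ι → P → ℝ} {Z : Finset ι}
  {δ : ι → P → ℝ} {M : (∀ i ∈ Z, P) → ℝ}

theorem sum_mul_le_realizationExp (hw0 : ∀ i ∈ Z, ∀ p ∈ SP, 0 ≤ w i p)
    (hw1 : ∀ i ∈ Z, ∑ p ∈ SP, w i p = 1) (hδM : ∀ σ, ∀ x : Z, δ x.1 (σ x.1 x.2) ≤ M σ)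
    {j : ι} (hj : j ∈ Z) :
    ∑ p ∈ SP, w j p * δ j p ≤ realizationExp SP w Z M := by
  rw [← realizationExp_comp_eval hw1 hj]
  exact realizationExp_mono hw0 fun σ => hδM σ ⟨j, hj⟩

theorem mul_one_sub_prod_le_realizationExp (hw0 : ∀ i ∈ Z, ∀ p ∈ SP, 0 ≤ w i p)
    (hw1 : ∀ i ∈ Z, ∑ p ∈ SP, w i p = 1) (hM0 : ∀ σ, 0 ≤ M σ)
    (hδM : ∀ σ, ∀ x : Z, δ x.1 (σ x.1 x.2) ≤ M σ) (a : ℝ) :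
    a * (1 - ∏ i ∈ Z, ∑ p ∈ SP, w i p * if δ i p ≤ a then 1 else 0) ≤
      realizationExp SP w Z M := by
  have hexp : realizationExp SP w Z (fun σ => a * (1 - ∏ x ∈ Z.attach,
      if δ x.1 (σ x.1 x.2) ≤ a then 1 else 0)) =
        a * (1 - ∏ i ∈ Z, ∑ p ∈ SP, w i p * if δ i p ≤ a then 1 else 0) := by
    rw [realizationExp_const_mul, realizationExp_sub, realizationExp_one hw1,
      realizationExp_prod fun i p => if δ i p ≤ a then 1 else 0]
  rw [← hexp]
  exact realizationExp_mono hw0 fun σ =>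
    mul_one_sub_prod_ite_le (hM0 σ) fun x _ => hδM σ x

theorem prod_mul_sum_le_realizationExp (hw0 : ∀ i ∈ Z, ∀ p ∈ SP, 0 ≤ w i p)
    (hw1 : ∀ i ∈ Z, ∑ p ∈ SP, w i p = 1)
    (hM0 : ∀ σ, 0 ≤ M σ) (hδM : ∀ σ, ∀ x : Z, δ x.1 (σ x.1 x.2) ≤ M σ) {a : ℝ} (ha : 0 ≤ a) :
    (∏ i ∈ Z, ∑ p ∈ SP, w i p * if δ i p ≤ a then 1 else 0) *
        ∑ i ∈ Z, ∑ p ∈ SP, w i p * max (δ i p - a) 0 ≤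
      realizationExp SP w Z M := by
  set q : ι → ℝ := fun i => ∑ p ∈ SP, w i p * if δ i p ≤ a then 1 else 0
  have hq0 : ∀ i ∈ Z, 0 ≤ q i := fun i hi =>
    sum_nonneg fun p hp => mul_nonneg (hw0 i hi p hp) (by split_ifs <;> norm_num)
  have hq1 : ∀ i ∈ Z, q i ≤ 1 := fun i hi => (hw1 i hi).symm ▸
    sum_le_sum fun p hp => mul_le_of_le_one_right (hw0 i hi p hp) (by split_ifs <;> norm_num)
  calc (∏ i ∈ Z, q i) * ∑ i ∈ Z, ∑ p ∈ SP, w i p * max (δ i p - a) 0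
      ≤ ∑ i ∈ Z, (∑ p ∈ SP, w i p * max (δ i p - a) 0) * ∏ i' ∈ Z.erase i, q i' := by
        rw [mul_sum]
        refine sum_le_sum fun i hi => ?_
        rw [mul_comm, ← mul_prod_erase Z q hi]
        exact mul_le_mul_of_nonneg_left (mul_le_of_le_one_left
          (prod_nonneg fun i' hi' => hq0 i' (mem_of_mem_erase hi')) (hq1 i hi))
          (sum_nonneg fun p hp => mul_nonneg (hw0 i hi p hp) (le_max_right _ _))
    _ = realizationExp SP w Z fun σ => ∑ x ∈ Z.attach,
          max (δ x.1 (σ x.1 x.2) - a) 0 *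
            ∏ y ∈ Z.attach.erase x, if δ y.1 (σ y.1 y.2) ≤ a then 1 else 0 := by
        rw [realizationExp_sum, ← sum_attach Z]
        exact sum_congr rfl fun x _ => (realizationExp_mul_prod_erase x.2 _ _).symm
    _ ≤ realizationExp SP w Z M :=
        realizationExp_mono hw0 fun σ =>
          sum_max_sub_mul_prod_ite_le ha (hM0 σ) fun x _ => hδM σ x

end Domination

section CenterCost

variable {P ι : Type*} [MetricSpace P] [DecidableEq ι] {Z O : Finset ι} {π : ι → P}

/-- `cgCost` is the infimum of `realizationExp SP w Z (maxAssignDist Z O π)` over admissible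
`K`, `O`, `π`. -/
noncomputable def maxAssignDist (Z O : Finset ι) (π : ι → P) (σ : ∀ i ∈ Z, P) : ℝ :=
  sSup (insert 0 { x : ℝ | ∃ j, ∃ hj : j ∈ Z \ O,
    x = dist (σ j (Finset.sdiff_subset hj)) (π j) })

theorem bddAbove_insert_assignDist (σ : ∀ i ∈ Z, P) :
    BddAbove (insert 0 { x : ℝ | ∃ j, ∃ hj : j ∈ Z \ O,
      x = dist (σ j (Finset.sdiff_subset hj)) (π j) }) := by
  refine ((Set.finite_range fun j : ↥(Z \ O) =>
    dist (σ j.1 (sdiff_subset j.2)) (π j.1)).subset ?_).insert 0 |>.bddAbove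
  rintro x ⟨j, hj, rfl⟩
  exact ⟨⟨j, hj⟩, rfl⟩

theorem maxAssignDist_nonneg (σ : ∀ i ∈ Z, P) : 0 ≤ maxAssignDist Z O π σ :=
  le_csSup (bddAbove_insert_assignDist σ) (Set.mem_insert _ _)

theorem dist_le_maxAssignDist (σ : ∀ i ∈ Z, P) {j : ι} (hj : j ∈ Z \ O) :
    dist (σ j (sdiff_subset hj)) (π j) ≤ maxAssignDist Z O π σ :=
  le_csSup (bddAbove_insert_assignDist σ) (Set.mem_insert_of_mem _ ⟨j, hj, rfl⟩)

end CenterCost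

theorem mem_nodeSupp {P ι : Type*} [DecidableEq P] [DecidableEq ι] {SP : Finset P}
    {w : ι → P → ℝ} {Z : Finset ι} {q : P} :
    q ∈ nodeSupp SP w Z ↔ ∃ j ∈ Z, q ∈ SP ∧ 0 < w j q := by
  simp [nodeSupp]

section MedianCost

variable {P ι : Type*} [MetricSpace P] [DecidableEq P] [DecidableEq ι]
  {SP : Finset P} {w : ι → P → ℝ} {Z : Finset ι} {k t : ℕ}

theorem exists_mem_nodeSupp_dist_le (hw0 : ∀ i ∈ Z, ∀ p ∈ SP, 0 ≤ w i p)
    (hw1 : ∀ i ∈ Z, ∑ p ∈ SP, w i p = 1) {j : ι} (hj : j ∈ Z) (m : P) :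
    ∃ q ∈ nodeSupp SP w Z, dist q m ≤ ∑ p ∈ SP, w j p * dist p m := by
  obtain ⟨q, hq, hwq, hqm⟩ := exists_pos_weight_le_sum_mul (hw0 j hj) (hw1 j hj) (dist · m)
  exact ⟨q, mem_nodeSupp.mpr ⟨j, hj, hq, hwq⟩, hqm⟩

theorem trMedCost_le_of_centers (hw0 : ∀ i ∈ Z, ∀ p ∈ SP, 0 ≤ w i p)
    (hw1 : ∀ i ∈ Z, ∑ p ∈ SP, w i p = 1) (hZ : Z.Nonempty) (hk : 1 ≤ k)
    {O : Finset ι} (hOZ : O ⊆ Z) (hOt : O.card ≤ t) {κ : ι → P}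
    (hκ : ∀ j ∈ Z \ O, κ j ∈ nodeSupp SP w Z) (hκk : ((Z \ O).image κ).card ≤ k) (τ : ℝ) :
    trMedCost SP w Z k t τ ≤ ∑ j ∈ Z \ O, ∑ p ∈ SP, w j p * max (dist p (κ j) - τ) 0 := by
  have hbdd : BddBelow { c : ℝ | ∃ (K : Finset P) (O : Finset ι),
      K ⊆ nodeSupp SP w Z ∧ K.Nonempty ∧ K.card ≤ k ∧ O ⊆ Z ∧ O.card ≤ t ∧
      c = ∑ j ∈ Z \ O,
        sInf ((fun m => ∑ p ∈ SP, w j p * max (dist p m - τ) 0) '' (K : Set P)) } := by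
    refine ⟨0, ?_⟩
    rintro _ ⟨K, O, -, -, -, -, -, rfl⟩
    refine sum_nonneg fun j hj => Real.sInf_nonneg ?_
    rintro _ ⟨m, -, rfl⟩
    exact sum_nonneg fun p hp => mul_nonneg (hw0 j (mem_sdiff.mp hj).1 p hp) (le_max_right _ _)
  rcases (Z \ O).eq_empty_or_nonempty with hD | hD
  · obtain ⟨j, hj⟩ := hZ
    obtain ⟨q, hq, -⟩ := exists_mem_nodeSupp_dist_le hw0 hw1 hj (κ j)
    refine (csInf_le hbdd ⟨{q}, O, singleton_subset_iff.mpr hq, singleton_nonempty q,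
      by simpa using hk, hOZ, hOt, rfl⟩).trans ?_
    simp [hD]
  · refine (csInf_le hbdd ⟨(Z \ O).image κ, O, image_subset_iff.mpr hκ, hD.image κ, hκk,
      hOZ, hOt, rfl⟩).trans (sum_le_sum fun j hj => ?_)
    exact csInf_le (((Z \ O).image κ).finite_toSet.image _).bddBelow
      ⟨κ j, mem_coe.mpr (mem_image_of_mem κ hj), rfl⟩

theorem trMedCost_le_sum_excess (hw0 : ∀ i ∈ Z, ∀ p ∈ SP, 0 ≤ w i p)
    (hw1 : ∀ i ∈ Z, ∑ p ∈ SP, w i p = 1) (hZ : Z.Nonempty) (hk : 1 ≤ k)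
    {K : Finset P} (hK : K.card ≤ k) {O : Finset ι} (hOZ : O ⊆ Z) (hOt : O.card ≤ t)
    {π : ι → P} (hπ : ∀ j ∈ Z \ O, π j ∈ K) {r b τ : ℝ}
    (hr : ∀ j ∈ Z \ O, ∑ p ∈ SP, w j p * dist p (π j) ≤ r) (hrb : r + b ≤ τ) :
    trMedCost SP w Z k t τ ≤ ∑ j ∈ Z \ O, ∑ p ∈ SP, w j p * max (dist p (π j) - b) 0 := by
  have hrep : ∀ m, ∃ q, (∃ j ∈ Z \ O, π j = m) → q ∈ nodeSupp SP w Z ∧ dist q m ≤ r := by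
    intro m
    by_cases h : ∃ j ∈ Z \ O, π j = m
    · obtain ⟨j, hj, rfl⟩ := h
      obtain ⟨q, hq, hqm⟩ := exists_mem_nodeSupp_dist_le hw0 hw1 (mem_sdiff.mp hj).1 (π j)
      exact ⟨q, fun _ => ⟨hq, hqm.trans (hr j hj)⟩⟩
    · exact ⟨m, fun h' => absurd h' h⟩
  choose g hg using hrep
  have hcard : ((Z \ O).image (g ∘ π)).card ≤ k := by
    rw [← image_image]
    exact card_image_le.trans ((card_le_card (image_subset_iff.mpr hπ)).trans hK)
  refine (trMedCost_le_of_centers hw0 hw1 hZ hk hOZ hOt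
    (fun j hj => (hg (π j) ⟨j, hj, rfl⟩).1) hcard τ).trans
    (sum_le_sum fun j hj => sum_le_sum fun p hp => ?_)
  refine mul_le_mul_of_nonneg_left (max_le_max ?_ le_rfl) (hw0 j (mem_sdiff.mp hj).1 p hp)
  have hgπ := (hg (π j) ⟨j, hj, rfl⟩).2
  have htri := dist_triangle p (π j) (g (π j))
  rw [dist_comm (π j)] at htri
  linarith

end MedianCost

theorem div_three_le_realizationExp_maxAssignDist {P ι : Type*} [MetricSpace P] [DecidableEq P]
    [DecidableEq ι] {SP : Finset P} {w : ι → P → ℝ} {Z : Finset ι} {k t : ℕ} {τ : ℝ}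
    (hw0 : ∀ i ∈ Z, ∀ p ∈ SP, 0 ≤ w i p) (hw1 : ∀ i ∈ Z, ∑ p ∈ SP, w i p = 1)
    (hZ : Z.Nonempty) (hk : 1 ≤ k) (h : τ ≤ trMedCost SP w Z k t τ)
    {K : Finset P} (hK : K.card ≤ k) {O : Finset ι} (hOZ : O ⊆ Z) (hOt : O.card ≤ t)
    {π : ι → P} (hπ : ∀ j ∈ Z \ O, π j ∈ K) :
    τ / 3 ≤ realizationExp SP w Z (maxAssignDist Z O π) := by
  by_contra! hc
  set c := realizationExp SP w Z (maxAssignDist Z O π)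
  set δ : ι → P → ℝ := fun i p => if i ∈ Z \ O then dist p (π i) else 0
  have hM0 : ∀ σ, 0 ≤ maxAssignDist Z O π σ := maxAssignDist_nonneg
  have hδM : ∀ σ, ∀ x : Z, δ x.1 (σ x.1 x.2) ≤ maxAssignDist Z O π σ := fun σ x => by
    by_cases hx : x.1 ∈ Z \ O
    · simpa only [δ, if_pos hx] using dist_le_maxAssignDist σ hx
    · simpa only [δ, if_neg hx] using hM0 σ
  have hc0 : 0 ≤ c := by
    have := realizationExp_mono hw0 (F := fun _ => 0) hM0
    rwa [show realizationExp SP w Z (fun _ => 0) = 0 by simp [realizationExp]] at this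
  set a := 2 * τ / 3 with ha
  have ha0 : 0 ≤ a := by linarith
  set Q := ∏ i ∈ Z, ∑ p ∈ SP, w i p * if δ i p ≤ a then 1 else 0
  set E := ∑ i ∈ Z, ∑ p ∈ SP, w i p * max (δ i p - a) 0
  have hQ0 : 0 ≤ Q := prod_nonneg fun i hi =>
    sum_nonneg fun p hp => mul_nonneg (hw0 i hi p hp) (by split_ifs <;> norm_num)
  have hA : a * (1 - Q) ≤ c := mul_one_sub_prod_le_realizationExp hw0 hw1 hM0 hδM a
  have hB : Q * E ≤ c := prod_mul_sum_le_realizationExp hw0 hw1 hM0 hδM ha0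
  have hmed : trMedCost SP w Z k t τ ≤ E := by
    refine (trMedCost_le_sum_excess hw0 hw1 hZ hk hK hOZ hOt hπ (r := c) (b := a)
      (fun j hj => by simpa only [δ, if_pos hj] using
        sum_mul_le_realizationExp hw0 hw1 hδM (mem_sdiff.mp hj).1) (by linarith)).trans ?_
    refine (sum_congr rfl fun j hj => by simp only [δ, if_pos hj]).trans_le
      (sum_le_sum_of_subset_of_nonneg sdiff_subset fun i hi _ => ?_)
    exact sum_nonneg fun p hp => mul_nonneg (hw0 i hi p hp) (le_max_right _ _)
  have hτE : τ ≤ E := h.trans hmed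
  nlinarith [mul_le_mul_of_nonneg_left hτE hQ0]

theorem cgCost_ge_of_trMedCost_ge_general {P : Type*} {ι : Type*} [MetricSpace P]
    [DecidableEq P] [DecidableEq ι]
    (SP : Finset P)
    (A : Finset ι) (w : ι → P → ℝ)
    (hw0 : ∀ j ∈ A, ∀ p ∈ SP, 0 ≤ w j p)
    (hw1 : ∀ j ∈ A, ∑ p ∈ SP, w j p = 1)
    (Z : Finset ι) (hZA : Z ⊆ A) (hZne : Z.Nonempty)
    (k t : ℕ) (hk : 1 ≤ k) (τ : ℝ)
    (h : trMedCost SP w Z k t τ ≥ τ) :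
    cgCost SP w Z k t ≥ τ / 3 := by
  have hw0Z : ∀ i ∈ Z, ∀ p ∈ SP, 0 ≤ w i p := fun i hi => hw0 i (hZA hi)
  have hw1Z : ∀ i ∈ Z, ∑ p ∈ SP, w i p = 1 := fun i hi => hw1 i (hZA hi)
  obtain ⟨j, hj⟩ := hZne
  obtain ⟨q, -⟩ := exists_pos_weight_le_sum_mul (hw0Z j hj) (hw1Z j hj) 0
  refine le_csInf ⟨_, {q}, singleton_nonempty q, by simpa using hk, ∅, empty_subset Z,
    by simp, fun _ => q, fun _ _ => mem_singleton_self q, rfl⟩ ?_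
  rintro _ ⟨K, -, hK, O, hOZ, hOt, π, hπ, rfl⟩
  exact div_three_le_realizationExp_maxAssignDist hw0Z hw1Z ⟨j, hj⟩ hk h hK hOZ hOt hπ

/-- Lemma 6.10: if the truncated (k,t)-median cost is at least `τ`, then the
(k,t)-center-g cost is at least `τ/3`. -/
theorem cgCost_ge_of_trMedCost_ge {P : Type*} {ι : Type*} [MetricSpace P]
    [DecidableEq P] [DecidableEq ι]
    (SP : Finset P) (hSP : SP.Nonempty)
    (A : Finset ι) (w : ι → P → ℝ)
    (hw0 : ∀ j ∈ A, ∀ p ∈ SP, 0 ≤ w j p)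
    (hw1 : ∀ j ∈ A, ∑ p ∈ SP, w j p = 1)
    (Z : Finset ι) (hZA : Z ⊆ A) (hZne : Z.Nonempty)
    (k t : ℕ) (hk : 1 ≤ k) (τ : ℝ) (hτ : 0 ≤ τ)
    (h : trMedCost SP w Z k t τ ≥ τ) :
    cgCost SP w Z k t ≥ τ / 3 :=
  cgCost_ge_of_trMedCost_ge_general SP A w hw0 hw1 Z hZA hZne k t hk τ h
end

section
/- Let X be a metric space, A a finite subset partitioned as A = A_1 ⊎ ⋯ ⊎ A_s with each A_i nonempty, and k ≥ 1 an integer. For each i let M_i ⊆ A_i be nonempty with |M_i| ≤ k and π_i : A_i → M_i an assignment; let π : A → M be the combined assignment with M = ∪_i M_i and let L_∞ = max_{j∈A} d(j, π(j)). Then: (a) there exists a nonempty K ⊆ M with |K| ≤ k such that max_{m∈M} d(m,K) ≤ 2·( L_∞ + Ccen(A,k,0) ); and (b) for every nonempty K ⊆ M, max_{j∈A} d(j,K) ≤ max_{m∈M} d(m,K) + L_∞, where d(p,K) = min_{x∈K} d(p,x). -/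
/-!
Every point `j` lies within `L∞` of its representative `π j ∈ M`. Moving the centers of an
optimal `k`-center solution `K₀ ⊆ A` to their representatives `π '' K₀ ⊆ M` therefore costs
at most `L∞` more on `M ⊆ A`, which gives (a); and for any `K ⊆ M`, the triangle inequality
through `π j` gives (b).
-/

open Metric Finset

section FiniteSupremum

variable {α : Type*}

lemma sSup_insert_zero_image_le_iff (T : Finset α) (f : α → ℝ) (b : ℝ) :
    sSup (insert 0 (f '' (T : Set α))) ≤ b ↔ 0 ≤ b ∧ ∀ x ∈ T, f x ≤ b := by
  rw [csSup_le_iff ((T.finite_toSet.image f).insert 0).bddAbove (Set.insert_nonempty _ _)]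
  simp only [Set.forall_mem_insert, Set.forall_mem_image, Finset.mem_coe]

lemma sSup_insert_zero_image_nonneg (T : Finset α) (f : α → ℝ) :
    0 ≤ sSup (insert 0 (f '' (T : Set α))) :=
  ((sSup_insert_zero_image_le_iff T f _).1 le_rfl).1

lemma le_sSup_insert_zero_image {T : Finset α} (f : α → ℝ) {x : α} (hx : x ∈ T) :
    f x ≤ sSup (insert 0 (f '' (T : Set α))) :=
  ((sSup_insert_zero_image_le_iff T f _).1 le_rfl).2 x hx

end FiniteSupremum

section Centers

variable {X : Type*} [MetricSpace X] [DecidableEq X]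

lemma exists_eq_cenCost {S : Finset X} (hS : S.Nonempty) {k : ℕ} (hk : 1 ≤ k) (t : ℕ) :
    ∃ K O : Finset X, K ⊆ S ∧ K.Nonempty ∧ K.card ≤ k ∧ O ⊆ S ∧ O.card ≤ t ∧
      cenCost S k t =
        sSup (insert 0 ((fun p => infDist p (K : Set X)) '' ((S \ O : Finset X) : Set X))) := by
  obtain ⟨a, ha⟩ := hS
  let C : Set ℝ := { c | ∃ K O : Finset X, K ⊆ S ∧ K.Nonempty ∧ K.card ≤ k ∧ O ⊆ S ∧
    O.card ≤ t ∧
    c = sSup (insert 0 ((fun p => infDist p (K : Set X)) '' ((S \ O : Finset X) : Set X))) }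
  have hne : C.Nonempty :=
    ⟨_, {a}, ∅, singleton_subset_iff.2 ha, singleton_nonempty a, by simpa using hk,
      empty_subset S, by simp, rfl⟩
  have hfin : C.Finite := by
    refine ((S.powerset ×ˢ S.powerset).finite_toSet.image fun KO : Finset X × Finset X =>
      sSup (insert 0 ((fun p => infDist p (KO.1 : Set X)) ''
        ((S \ KO.2 : Finset X) : Set X)))).subset ?_
    rintro c ⟨K, O, hK, -, -, hO, -, rfl⟩
    exact ⟨(K, O), by simp [hK, hO], rfl⟩
  exact hne.csInf_mem hfin

lemma exists_infDist_le_cenCost {S : Finset X} (hS : S.Nonempty) {k : ℕ} (hk : 1 ≤ k) :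
    ∃ K ⊆ S, K.Nonempty ∧ K.card ≤ k ∧ ∀ p ∈ S, infDist p (K : Set X) ≤ cenCost S k 0 := by
  obtain ⟨K, O, hKS, hK, hKk, -, hO, hcost⟩ := exists_eq_cenCost hS hk 0
  rw [card_eq_zero.1 (Nat.le_zero.1 hO), sdiff_empty] at hcost
  refine ⟨K, hKS, hK, hKk, fun p hp => ?_⟩
  rw [hcost]
  exact le_sSup_insert_zero_image (fun p => infDist p (K : Set X)) hp

end Centers

lemma Metric.infDist_image_le_infDist_add {X : Type*} [PseudoMetricSpace X] {s : Set X}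
    (hs : s.Nonempty) {π : X → X} {L : ℝ} (hπ : ∀ x ∈ s, dist x (π x) ≤ L) (m : X) :
    infDist m (π '' s) ≤ infDist m s + L := by
  suffices infDist m (π '' s) - L ≤ infDist m s by linarith
  refine (le_infDist hs).2 fun x hx => ?_
  have hmπx : infDist m (π '' s) ≤ dist m (π x) := infDist_le_dist_of_mem ⟨x, hx, rfl⟩
  linarith [dist_triangle m x (π x), hπ x hx]

theorem preclustering_center_general {X : Type*} [MetricSpace X] [DecidableEq X]
    {s : ℕ} (hs : 0 < s) (𝒜 : Fin s → Finset X)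
    (hne : ∀ i, (𝒜 i).Nonempty)
    (A : Finset X) (hA : A = Finset.univ.biUnion 𝒜)
    (k : ℕ) (hk : 1 ≤ k)
    (Mi : Fin s → Finset X) (hMisub : ∀ i, Mi i ⊆ 𝒜 i)
    (π : X → X) (hπ : ∀ i, ∀ j ∈ 𝒜 i, π j ∈ Mi i)
    (M : Finset X) (hM : M = Finset.univ.biUnion Mi)
    (Linf : ℝ) (hLinf : Linf = sSup (insert 0 ((fun j => dist j (π j)) '' (A : Set X)))) :
    (∃ K : Finset X, K ⊆ M ∧ K.Nonempty ∧ K.card ≤ k ∧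
      sSup (insert 0 ((fun m => infDist m (K : Set X)) '' (M : Set X))) ≤
        2 * (Linf + cenCost A k 0)) ∧
    (∀ K : Finset X, K ⊆ M → K.Nonempty →
      sSup (insert 0 ((fun j => infDist j (K : Set X)) '' (A : Set X))) ≤
        sSup (insert 0 ((fun m => infDist m (K : Set X)) '' (M : Set X))) + Linf) := by
  have hAne : A.Nonempty := hA ▸ (hne ⟨0, hs⟩).mono (subset_biUnion_of_mem 𝒜 (mem_univ _))
  have hMA : M ⊆ A := hM ▸ hA ▸ biUnion_mono fun i _ => hMisub i
  have hπM : ∀ j ∈ A, π j ∈ M := by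
    simp only [hA, hM, mem_biUnion, mem_univ, true_and]
    exact fun j ⟨i, hj⟩ => ⟨i, hπ i j hj⟩
  have hL : 0 ≤ Linf ∧ ∀ j ∈ A, dist j (π j) ≤ Linf :=
    (sSup_insert_zero_image_le_iff A _ _).1 hLinf.ge
  refine ⟨?_, fun K _ _ => ?_⟩
  · obtain ⟨K₀, hK₀A, hK₀, hK₀k, hcost⟩ := exists_infDist_le_cenCost hAne hk
    have hc : 0 ≤ cenCost A k 0 := by
      obtain ⟨a, ha⟩ := hAne
      exact infDist_nonneg.trans (hcost a ha)
    refine ⟨K₀.image π, fun y hy => ?_, hK₀.image π, card_image_le.trans hK₀k,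
      (sSup_insert_zero_image_le_iff M _ _).2 ⟨by linarith [hL.1], fun m hm => ?_⟩⟩
    · obtain ⟨x, hx, rfl⟩ := mem_image.1 hy
      exact hπM x (hK₀A hx)
    · have hmove := infDist_image_le_infDist_add (s := (K₀ : Set X)) (mod_cast hK₀)
        (fun x hx => hL.2 x (hK₀A hx)) m
      rw [← coe_image] at hmove
      linarith [hcost m (hMA hm)]
  · refine (sSup_insert_zero_image_le_iff A _ _).2
      ⟨add_nonneg (sSup_insert_zero_image_nonneg M _) hL.1, fun j hj => ?_⟩
    linarith [infDist_le_infDist_add_dist (x := j) (y := π j) (s := (K : Set X)),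
      le_sSup_insert_zero_image (fun m => infDist m (K : Set X)) (hπM j hj), hL.2 j hj]

/-- Corollary 2.2 (k-center extension of Theorem 2.1): (a) there is a k-center
solution on the preclustering centers of cost at most `2(L∞ + Ccen(A,k,0))`, and
(b) any center set `K ⊆ M` yields a global solution with cost increased by at
most `L∞`. -/
theorem preclustering_center {X : Type*} [MetricSpace X] [DecidableEq X]
    {s : ℕ} (hs : 0 < s) (𝒜 : Fin s → Finset X)
    (hdisj : ∀ i j, i ≠ j → Disjoint (𝒜 i) (𝒜 j))
    (hne : ∀ i, (𝒜 i).Nonempty)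
    (A : Finset X) (hA : A = Finset.univ.biUnion 𝒜)
    (k : ℕ) (hk : 1 ≤ k)
    (Mi : Fin s → Finset X) (hMisub : ∀ i, Mi i ⊆ 𝒜 i)
    (hMine : ∀ i, (Mi i).Nonempty) (hMicard : ∀ i, (Mi i).card ≤ k)
    (π : X → X) (hπ : ∀ i, ∀ j ∈ 𝒜 i, π j ∈ Mi i)
    (M : Finset X) (hM : M = Finset.univ.biUnion Mi)
    (Linf : ℝ) (hLinf : Linf = sSup (insert 0 ((fun j => dist j (π j)) '' (A : Set X)))) :
    (∃ K : Finset X, K ⊆ M ∧ K.Nonempty ∧ K.card ≤ k ∧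
      sSup (insert 0 ((fun m => infDist m (K : Set X)) '' (M : Set X))) ≤
        2 * (Linf + cenCost A k 0)) ∧
    (∀ K : Finset X, K ⊆ M → K.Nonempty →
      sSup (insert 0 ((fun j => infDist j (K : Set X)) '' (A : Set X))) ≤
        sSup (insert 0 ((fun m => infDist m (K : Set X)) '' (M : Set X))) + Linf) :=
  preclustering_center_general hs 𝒜 hne A hA k hk Mi hMisub π hπ M hM Linf hLinf
end

section
/- Let (P,d) be a metric space, S_P a finite nonempty subset of P, and w : S_P → ℝ a probability weight function (w(p) ≥ 0 for all p and ∑_{p∈S_P} w(p) = 1); write E_w[f] = ∑_{p∈S_P} w(p)·f(p) for f : P → ℝ. Let τ ≥ 0, let c ∈ P, and let c' ∈ P satisfy d(c,c') ≤ d(c,x) for every x ∈ S_P with w(x) > 0. Then E_w[L_{2τ}(·, c')] ≤ 2·E_w[L_τ(·, c)], where L_τ(u,v) = max(d(u,v) − τ, 0). -/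
open Metric Finset

theorem dist_le_two_mul_of_dist_le {P : Type*} [PseudoMetricSpace P] {p c c' : P}
    (h : dist c c' ≤ dist c p) : dist p c' ≤ 2 * dist p c := by
  linarith [dist_triangle p c c', dist_comm c p]

theorem max_sub_mul_le_mul_max {a b k τ : ℝ} (hk : 0 ≤ k) (h : a ≤ k * b) :
    max (a - k * τ) 0 ≤ k * max (b - τ) 0 := by
  rw [mul_max_of_nonneg _ _ hk, mul_zero, mul_sub]
  exact max_le_max_right 0 (by linarith)

theorem truncated_dist_le_two_mul_of_dist_le {P : Type*} [PseudoMetricSpace P] {p c c' : P}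
    (τ : ℝ) (h : dist c c' ≤ dist c p) :
    max (dist p c' - 2 * τ) 0 ≤ 2 * max (dist p c - τ) 0 :=
  max_sub_mul_le_mul_max zero_le_two (dist_le_two_mul_of_dist_le h)

theorem expected_truncated_dist_nearest_center_general {P : Type*} [MetricSpace P]
    (SP : Finset P)
    (w : P → ℝ) (hw0 : ∀ p ∈ SP, 0 ≤ w p)
    (τ : ℝ) (c c' : P)
    (hc' : ∀ x ∈ SP, 0 < w x → dist c c' ≤ dist c x) :
    ∑ p ∈ SP, w p * max (dist p c' - 2 * τ) 0 ≤
      2 * ∑ p ∈ SP, w p * max (dist p c - τ) 0 := by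
  rw [mul_sum]
  refine sum_le_sum fun p hp => ?_
  rcases (hw0 p hp).lt_or_eq with hpos | hzero
  · calc w p * max (dist p c' - 2 * τ) 0
        ≤ w p * (2 * max (dist p c - τ) 0) :=
          mul_le_mul_of_nonneg_left
            (truncated_dist_le_two_mul_of_dist_le τ (hc' p hp hpos)) hpos.le
      _ = 2 * (w p * max (dist p c - τ) 0) := mul_left_comm _ _ _
  · simp [← hzero]

/-- Replacing a center `c` by its nearest point `c'` among the support of a
distribution at most doubles the expected truncated distance, when the truncation
parameter is doubled (key step in the proof of Lemma 5.11). -/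
theorem expected_truncated_dist_nearest_center {P : Type*} [MetricSpace P]
    (SP : Finset P) (hSP : SP.Nonempty)
    (w : P → ℝ) (hw0 : ∀ p ∈ SP, 0 ≤ w p) (hw1 : ∑ p ∈ SP, w p = 1)
    (τ : ℝ) (hτ : 0 ≤ τ) (c c' : P)
    (hc' : ∀ x ∈ SP, 0 < w x → dist c c' ≤ dist c x) :
    ∑ p ∈ SP, w p * max (dist p c' - 2 * τ) 0 ≤
      2 * ∑ p ∈ SP, w p * max (dist p c - τ) 0 :=
  expected_truncated_dist_nearest_center_general SP w hw0 τ c c' hc'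
end
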